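/- With the above notation, r·(l + m + n + 1 − √(l²+1) − √(m²+1) − √(n²+1))/(2l) = r_A·cos²σ. -/

import Mathlib

/-! Put `P = cos α cos β cos γ`, `A = cos α sin β sin γ`, `B = sin α cos β sin γ`,
`C = sin α sin β cos γ`. Since `cos² α = (s - a) / s`, comparing squares gives `r = s P` and
`√(l² + 1) = (s / r) A`, and cyclically for `m`, `n`. Hence
`cos 2σ = P - A - B - C = (r / s) (1 - √(l² + 1) - √(m² + 1) - √(n² + 1))`, and the identity
follows from `l + m + n = s / r`, `2 cos² σ = 1 + cos 2σ` and `r_A = s r / (s - a)`. -/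

open Real

lemma Real.cos_add_add (x y z : ℝ) :
    cos (x + y + z) = cos x * cos y * cos z - cos x * sin y * sin z
      - sin x * cos y * sin z - sin x * sin y * cos z := by
  rw [cos_add, cos_add, sin_add]
  ring

lemma Real.cos_sq_eq_of_sin_sq {θ t s : ℝ} (hs : s ≠ 0) (h : sin θ ^ 2 = t / s) :
    cos θ ^ 2 = (s - t) / s := by
  rw [cos_sq', h]
  field_simp

lemma Real.cos_pos_and_sin_pos_of_mem_Ioo {θ : ℝ} (hθ : θ ∈ Set.Ioo 0 (π / 2)) :
    0 < cos θ ∧ 0 < sin θ :=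
  ⟨cos_pos_of_mem_Ioo ⟨by linarith [hθ.1, pi_pos], hθ.2⟩,
    sin_pos_of_mem_Ioo ⟨hθ.1, by linarith [hθ.2, pi_pos]⟩⟩

lemma sqrt_mul_mul_div_eq_of_sq_eq {x y z s u v w : ℝ} (hs : 0 < s)
    (hu : u ^ 2 = x / s) (hv : v ^ 2 = y / s) (hw : w ^ 2 = z / s) (huvw : 0 ≤ u * v * w) :
    √(x * y * z / s) = s * (u * v * w) := by
  rw [← sqrt_sq (mul_nonneg hs.le huvw), mul_pow, mul_pow, mul_pow, hu, hv, hw]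
  field_simp

lemma sqrt_mul_mul_div_eq_div_mul_sqrt {x y z s : ℝ} (hs : 0 < s) (hx : 0 < x) :
    √(s * y * z / x) = s / x * √(x * y * z / s) := by
  rw [show s * y * z / x = (s / x) ^ 2 * (x * y * z / s) by field_simp,
    sqrt_mul (sq_nonneg _), sqrt_sq (by positivity)]

section Triangle

variable {a b c s r : ℝ}

lemma div_inradius_sq_add_one (hs : 2 * s = a + b + c) (hs0 : s ≠ 0) (hr0 : r ≠ 0)
    (hr : r ^ 2 = (s - a) * (s - b) * (s - c) / s) :
    ((s - a) / r) ^ 2 + 1 = (s - a) * b * c / s / r ^ 2 := by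
  rw [div_pow, div_add_one (pow_ne_zero 2 hr0), hr]
  congr 1
  field_simp
  linear_combination (s - a) * s * hs

lemma sqrt_div_inradius_sq_add_one {u v w : ℝ} (hs : 2 * s = a + b + c) (hs0 : 0 < s)
    (hr0 : 0 < r) (hr : r ^ 2 = (s - a) * (s - b) * (s - c) / s)
    (hu : u ^ 2 = (s - a) / s) (hv : v ^ 2 = b / s) (hw : w ^ 2 = c / s) (huvw : 0 ≤ u * v * w) :
    √(((s - a) / r) ^ 2 + 1) = s / r * (u * v * w) := by
  rw [div_inradius_sq_add_one hs hs0.ne' hr0.ne' hr, sqrt_div' _ (sq_nonneg r), sqrt_sq hr0.le,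
    sqrt_mul_mul_div_eq_of_sq_eq hs0 hu hv hw huvw]
  ring

end Triangle

theorem malfatti_radius_i6_A_general
    (a b c : ℝ)
    (habc : a < b + c) (hbca : b < c + a) (hcab : c < a + b)
    (s r rA α β γ σ l m n : ℝ)
    (hs : s = (a + b + c) / 2)
    (hr : r = Real.sqrt ((s - a) * (s - b) * (s - c) / s))
    (hrA : rA = Real.sqrt (s * (s - b) * (s - c) / (s - a)))
    (hα : α ∈ Set.Ioo 0 (π / 2)) (hβ : β ∈ Set.Ioo 0 (π / 2)) (hγ : γ ∈ Set.Ioo 0 (π / 2))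
    (hsinα : Real.sin α ^ 2 = a / s)
    (hsinβ : Real.sin β ^ 2 = b / s)
    (hsinγ : Real.sin γ ^ 2 = c / s)
    (hσ : σ = (α + β + γ) / 2)
    (hl : l = (s - a) / r) (hm : m = (s - b) / r) (hn : n = (s - c) / r) :
    r * (l + m + n + 1 - Real.sqrt (l ^ 2 + 1) - Real.sqrt (m ^ 2 + 1) - Real.sqrt (n ^ 2 + 1)) / (2 * l) = rA * Real.cos σ ^ 2 := by
  obtain ⟨hx, hy, hz⟩ : 0 < s - a ∧ 0 < s - b ∧ 0 < s - c := by
    subst hs; refine ⟨?_, ?_, ?_⟩ <;> linarith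
  have hs0 : 0 < s := by linarith
  have hr0 : 0 < r := hr ▸ sqrt_pos.2 (by positivity)
  have hr2 : r ^ 2 = (s - a) * (s - b) * (s - c) / s := hr ▸ sq_sqrt (by positivity)
  obtain ⟨hcα, hsα⟩ := cos_pos_and_sin_pos_of_mem_Ioo hα
  obtain ⟨hcβ, hsβ⟩ := cos_pos_and_sin_pos_of_mem_Ioo hβ
  obtain ⟨hcγ, hsγ⟩ := cos_pos_and_sin_pos_of_mem_Ioo hγ
  have hcosα := cos_sq_eq_of_sin_sq hs0.ne' hsinα
  have hcosβ := cos_sq_eq_of_sin_sq hs0.ne' hsinβ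
  have hcosγ := cos_sq_eq_of_sin_sq hs0.ne' hsinγ
  have h2s : 2 * s = a + b + c := by linarith
  have hP : r = s * (cos α * cos β * cos γ) :=
    hr ▸ sqrt_mul_mul_div_eq_of_sq_eq hs0 hcosα hcosβ hcosγ (by positivity)
  have hA : √(l ^ 2 + 1) = s / r * (cos α * sin β * sin γ) := hl ▸
    sqrt_div_inradius_sq_add_one h2s hs0 hr0 hr2 hcosα hsinβ hsinγ (by positivity)
  have hB : √(m ^ 2 + 1) = s / r * (cos β * sin γ * sin α) := hm ▸
    sqrt_div_inradius_sq_add_one (by linarith) hs0 hr0 (by rw [hr2]; ring) hcosβ hsinγ hsinα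
      (by positivity)
  have hC : √(n ^ 2 + 1) = s / r * (cos γ * sin α * sin β) := hn ▸
    sqrt_div_inradius_sq_add_one (by linarith) hs0 hr0 (by rw [hr2]; ring) hcosγ hsinα hsinβ
      (by positivity)
  have hcosσ : cos σ ^ 2 = (1 + cos (α + β + γ)) / 2 := by
    rw [cos_sq, hσ, mul_div_cancel₀ _ two_ne_zero]; ring
  have hrA' : rA = s / (s - a) * r :=
    hr ▸ hrA ▸ sqrt_mul_mul_div_eq_div_mul_sqrt hs0 hx
  rw [hA, hB, hC, hrA', hcosσ, cos_add_add, hl, hm, hn]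
  field_simp
  linear_combination hP + h2s

theorem malfatti_radius_i6_A
    (a b c : ℝ) (ha : 0 < a) (hb : 0 < b) (hc : 0 < c)
    (habc : a < b + c) (hbca : b < c + a) (hcab : c < a + b)
    (s r rA rB rC α β γ σ l m n : ℝ)
    (hs : s = (a + b + c) / 2)
    (hr : r = Real.sqrt ((s - a) * (s - b) * (s - c) / s))
    (hrA : rA = Real.sqrt (s * (s - b) * (s - c) / (s - a)))
    (hrB : rB = Real.sqrt (s * (s - c) * (s - a) / (s - b)))
    (hrC : rC = Real.sqrt (s * (s - a) * (s - b) / (s - c)))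
    (hα : α ∈ Set.Ioo 0 (π / 2)) (hβ : β ∈ Set.Ioo 0 (π / 2)) (hγ : γ ∈ Set.Ioo 0 (π / 2))
    (hsinα : Real.sin α ^ 2 = a / s)
    (hsinβ : Real.sin β ^ 2 = b / s)
    (hsinγ : Real.sin γ ^ 2 = c / s)
    (hσ : σ = (α + β + γ) / 2)
    (hl : l = (s - a) / r) (hm : m = (s - b) / r) (hn : n = (s - c) / r) :
    r * (l + m + n + 1 - Real.sqrt (l ^ 2 + 1) - Real.sqrt (m ^ 2 + 1) - Real.sqrt (n ^ 2 + 1)) / (2 * l) = rA * Real.cos σ ^ 2 :=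
  malfatti_radius_i6_A_general a b c habc hbca hcab s r rA α β γ σ l m n hs hr hrA hα hβ hγ hsinα
    hsinβ hsinγ hσ hl hm hn
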